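/- Suppose the real parameters satisfy αβγ ≤ 0, |β| = 1 and |α| = |γ| < 1. Then for all integers k₁, ℓ₁, k₂, ℓ₂ ≥ 1: |Cov(X_{k₁,ℓ₁}, X_{k₂,ℓ₂})| ≤ min(ℓ₁,ℓ₂) · |γ|^{|k₁−k₂|} / (1 − γ²). -/

import Mathlib

/-!
Under the sign condition, `|β| = 1` and `|α| = |γ|` force `γ = -αβ`, so the recursion factors
as `(1 - α S₁)(1 - β S₂) X = ε` in the two shift operators and
`X k ℓ = ∑_{i ≤ k, j ≤ ℓ} α^(k-i) β^(ℓ-j) ε i j`. The innovations are uncorrelated with unit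
variance, so the covariance is the sum of products of coefficients over the common indices
`i ≤ min k₁ k₂`, `j ≤ min ℓ₁ ℓ₂`. Each product has modulus `|γ|^|k₁-k₂| · γ^(2(min k₁ k₂ - i))`,
and the geometric series in `i` is at most `1 / (1 - γ²)`.
-/

open MeasureTheory ProbabilityTheory Filter

/-- The covariance of two real random variables. -/
noncomputable def cov {Ω : Type*} [MeasurableSpace Ω] (P : Measure Ω) (X Y : Ω → ℝ) : ℝ :=
  ∫ ω, (X ω - ∫ x, X x ∂P) * (Y ω - ∫ x, Y x ∂P) ∂P

open Finset

lemma eq_neg_mul_of_mul_mul_nonpos {α β γ : ℝ} (hsign : α * β * γ ≤ 0) (hβ : |β| = 1)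
    (hαγ : |α| = |γ|) : γ = -(α * β) := by
  have habs : |α * β * γ| = γ ^ 2 := by rw [abs_mul, abs_mul, hβ, hαγ, mul_one, ← sq, sq_abs]
  have hprod : γ * (α * β + γ) = 0 := by linear_combination abs_of_nonpos hsign - habs
  rcases mul_eq_zero.mp hprod with hγ | hsum
  · simp [hγ, abs_eq_zero.mp (hαγ.trans (by simp [hγ]))]
  · linear_combination hsum

lemma eq_sum_pow_mul_of_eq_mul_add {R : Type*} [CommSemiring R] (c : R) {y f : ℕ → R}
    (h0 : y 0 = 0) (hsucc : ∀ n, y (n + 1) = c * y n + f (n + 1)) (n : ℕ) :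
    y n = ∑ j ∈ Icc 1 n, c ^ (n - j) * f j := by
  induction n with
  | zero => simp [h0]
  | succ n ih =>
    rw [sum_Icc_succ_top (by omega), hsucc, ih, mul_sum, Nat.sub_self, pow_zero, one_mul]
    congr 1
    refine sum_congr rfl fun j hj => ?_
    rw [← mul_assoc, ← pow_succ', Nat.sub_add_comm (mem_Icc.mp hj).2]

lemma eq_sum_of_factored_rec {R : Type*} [CommRing R] {α β : R} {x e : ℕ → ℕ → R}
    (hrec : ∀ k ℓ, x (k + 1) (ℓ + 1) =
      α * x k (ℓ + 1) + β * x (k + 1) ℓ - α * β * x k ℓ + e (k + 1) (ℓ + 1))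
    (hk0 : ∀ k, x k 0 = 0) (h0ℓ : ∀ ℓ, x 0 ℓ = 0) (k ℓ : ℕ) :
    x k ℓ = ∑ p ∈ Icc 1 k ×ˢ Icc 1 ℓ, α ^ (k - p.1) * β ^ (ℓ - p.2) * e p.1 p.2 := by
  have hrow : ∀ k ℓ, x (k + 1) ℓ - α * x k ℓ = ∑ j ∈ Icc 1 ℓ, β ^ (ℓ - j) * e (k + 1) j :=
    fun k => eq_sum_pow_mul_of_eq_mul_add β (by simp [hk0])
      (fun ℓ => by rw [hrec]; ring)
  have hcol := eq_sum_pow_mul_of_eq_mul_add α (y := fun k => x k ℓ)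
    (f := fun i => ∑ j ∈ Icc 1 ℓ, β ^ (ℓ - j) * e i j) (h0ℓ ℓ)
    (fun k => by rw [← hrow]; ring) k
  rw [hcol, sum_product]
  simp_rw [mul_sum, mul_assoc]

lemma sum_Icc_pow_sub_le {x : ℝ} (hx0 : 0 ≤ x) (hx1 : x < 1) (m : ℕ) :
    ∑ i ∈ Icc 1 m, x ^ (m - i) ≤ 1 / (1 - x) := by
  rw [← Ico_add_one_right_eq_Icc, sum_Ico_reflect _ _ le_rfl]
  simpa using geom_sum_Ico_le_of_lt_one (m := 0) (n := m) hx0 hx1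

lemma abs_sum_inter_Icc_prod_le {α β : ℝ} (hβ : |β| = 1) (hα : |α| < 1) (k₁ ℓ₁ k₂ ℓ₂ : ℕ) :
    |∑ p ∈ (Icc 1 k₁ ×ˢ Icc 1 ℓ₁) ∩ (Icc 1 k₂ ×ˢ Icc 1 ℓ₂),
        α ^ (k₁ - p.1) * β ^ (ℓ₁ - p.2) * (α ^ (k₂ - p.1) * β ^ (ℓ₂ - p.2))| ≤
      ((min ℓ₁ ℓ₂ : ℕ) : ℝ) * |α| ^ ((k₁ : ℤ) - k₂).natAbs / (1 - α ^ 2) := by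
  set m := min k₁ k₂
  set d := ((k₁ : ℤ) - k₂).natAbs
  have hinter : (Icc 1 k₁ ×ˢ Icc 1 ℓ₁) ∩ (Icc 1 k₂ ×ˢ Icc 1 ℓ₂) = Icc 1 m ×ˢ Icc 1 (min ℓ₁ ℓ₂) := by
    ext ⟨i, j⟩
    simp only [mem_inter, mem_product, mem_Icc]
    omega
  have hterm : ∀ i ∈ Icc 1 m, ∀ j : ℕ,
      |α ^ (k₁ - i) * β ^ (ℓ₁ - j) * (α ^ (k₂ - i) * β ^ (ℓ₂ - j))| =
        |α| ^ d * (α ^ 2) ^ (m - i) := by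
    intro i hi j
    have hexp : k₁ - i + (k₂ - i) = d + 2 * (m - i) := by grind
    simp only [abs_mul, abs_pow, hβ, one_pow, mul_one]
    rw [← pow_add, hexp, pow_add, pow_mul, sq_abs]
  have hα2 : α ^ 2 < 1 := by nlinarith [abs_nonneg α, sq_abs α]
  rw [hinter]
  calc _ ≤ ∑ p ∈ Icc 1 m ×ˢ Icc 1 (min ℓ₁ ℓ₂),
          |α ^ (k₁ - p.1) * β ^ (ℓ₁ - p.2) * (α ^ (k₂ - p.1) * β ^ (ℓ₂ - p.2))| :=
        abs_sum_le_sum_abs _ _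
    _ = (min ℓ₁ ℓ₂ : ℕ) * (|α| ^ d * ∑ i ∈ Icc 1 m, (α ^ 2) ^ (m - i)) := by
        rw [sum_product, mul_sum, mul_sum]
        refine sum_congr rfl fun i hi => ?_
        rw [sum_congr rfl fun j _ => hterm i hi j, sum_const, Nat.card_Icc, nsmul_eq_mul,
          Nat.add_sub_cancel]
    _ ≤ (min ℓ₁ ℓ₂ : ℕ) * (|α| ^ d * (1 / (1 - α ^ 2))) := by
        gcongr
        exact sum_Icc_pow_sub_le (sq_nonneg α) hα2 m
    _ = _ := by ring

section Covariance

variable {Ω ι : Type*} [MeasurableSpace Ω] {P : Measure Ω} {ε : ι → Ω → ℝ} [DecidableEq ι]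

lemma covariance_eq_ite_of_iIndepFun [IsFiniteMeasure P] (hindep : iIndepFun ε P)
    (hmeas : ∀ i, AEMeasurable (ε i) P) (hvar : ∀ i, Var[ε i; P] = 1) (i j : ι) :
    cov[ε i, ε j; P] = if i = j then 1 else 0 := by
  have hmem : ∀ i, MemLp (ε i) 2 P := fun i =>
    memLp_two_of_variance_ne_zero (hmeas i).aestronglyMeasurable (by simp [hvar])
  split_ifs with hij
  · rw [hij, covariance_self (hmeas j), hvar]
  · exact (hindep.indepFun hij).covariance_eq_zero (hmem i) (hmem j)

lemma covariance_fun_sum_fun_sum_of_orthonormal [IsFiniteMeasure P] {S : Set ι}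
    (hmem : ∀ i ∈ S, MemLp (ε i) 2 P)
    (horth : ∀ i ∈ S, ∀ j ∈ S, cov[ε i, ε j; P] = if i = j then 1 else 0)
    {A B : Finset ι} (hA : ↑A ⊆ S) (hB : ↑B ⊆ S) (a b : ι → ℝ) :
    cov[fun ω => ∑ i ∈ A, a i * ε i ω, fun ω => ∑ j ∈ B, b j * ε j ω; P] =
      ∑ i ∈ A ∩ B, a i * b i := by
  rw [covariance_fun_sum_fun_sum' (fun i hi => (hmem i (hA hi)).const_mul (a i))
    (fun j hj => (hmem j (hB hj)).const_mul (b j)), ← sum_ite_mem A B]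
  refine sum_congr rfl fun i hi => ?_
  rw [sum_congr rfl fun j hj => by
    rw [covariance_const_mul_left, covariance_const_mul_right, horth i (hA hi) j (hB hj)]]
  simp only [mul_ite, mul_one, mul_zero, sum_ite_eq]

end Covariance

theorem cov_bound_edge_beta_general
    {Ω : Type*} [MeasurableSpace Ω] (P : Measure Ω) [IsProbabilityMeasure P]
    (ε : ℕ → ℕ → Ω → ℝ)
    (hmeas : ∀ k ℓ : ℕ, Measurable (ε k ℓ))
    (hindep : iIndepFun
      (fun p : {p : ℕ × ℕ // 1 ≤ p.1 ∧ 1 ≤ p.2} => ε p.1.1 p.1.2) P)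
    (hvar : ∀ k ℓ : ℕ, 1 ≤ k → 1 ≤ ℓ → variance (ε k ℓ) P = 1)
    (α β γ : ℝ)
    (X : ℕ → ℕ → Ω → ℝ)
    (hrec : ∀ k ℓ : ℕ, 1 ≤ k → 1 ≤ ℓ → ∀ ω : Ω,
      X k ℓ ω = α * X (k - 1) ℓ ω + β * X k (ℓ - 1) ω + γ * X (k - 1) (ℓ - 1) ω + ε k ℓ ω)
    (hbd1 : ∀ k : ℕ, ∀ ω : Ω, X k 0 ω = 0)
    (hbd2 : ∀ ℓ : ℕ, ∀ ω : Ω, X 0 ℓ ω = 0)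
    (hsign : α * β * γ ≤ 0) (hβ : |β| = 1) (hαγ : |α| = |γ|) (hγ : |γ| < 1) :
    ∀ k₁ ℓ₁ k₂ ℓ₂ : ℕ, 1 ≤ k₁ → 1 ≤ ℓ₁ → 1 ≤ k₂ → 1 ≤ ℓ₂ →
      |cov P (X k₁ ℓ₁) (X k₂ ℓ₂)| ≤
        ((min ℓ₁ ℓ₂ : ℕ) : ℝ) * |γ| ^ ((k₁ : ℤ) - k₂).natAbs / (1 - γ ^ 2) := by
  intro k₁ ℓ₁ k₂ ℓ₂ _ _ _ _
  have hγαβ := eq_neg_mul_of_mul_mul_nonpos hsign hβ hαγ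
  have hX : ∀ k ℓ, X k ℓ =
      fun ω => ∑ p ∈ Icc 1 k ×ˢ Icc 1 ℓ, α ^ (k - p.1) * β ^ (ℓ - p.2) * ε p.1 p.2 ω :=
    fun k ℓ => funext fun ω => eq_sum_of_factored_rec (α := α) (β := β)
      (x := fun k ℓ => X k ℓ ω) (e := fun k ℓ => ε k ℓ ω)
      (fun k ℓ => by
        rw [hrec (k + 1) (ℓ + 1) (by omega) (by omega) ω, hγαβ]
        simp only [Nat.add_sub_cancel]
        ring)
      (hbd1 · ω) (hbd2 · ω) k ℓ
  set S : Set (ℕ × ℕ) := {p | 1 ≤ p.1 ∧ 1 ≤ p.2}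
  have hrect : ∀ k ℓ, ↑(Icc 1 k ×ˢ Icc 1 ℓ) ⊆ S := fun k ℓ p hp => by
    simp only [coe_product, coe_Icc, Set.mem_prod, Set.mem_Icc] at hp
    exact ⟨hp.1.1, hp.2.1⟩
  have hmem : ∀ p ∈ S, MemLp (ε p.1 p.2) 2 P := fun p hp =>
    memLp_two_of_variance_ne_zero (hmeas _ _).aestronglyMeasurable (by simp [hvar _ _ hp.1 hp.2])
  have horth : ∀ p ∈ S, ∀ q ∈ S, cov[ε p.1 p.2, ε q.1 q.2; P] = if p = q then 1 else 0 :=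
    fun p hp q hq => by
      simpa [Subtype.ext_iff] using covariance_eq_ite_of_iIndepFun hindep
        (fun _ => (hmeas _ _).aemeasurable) (fun p => hvar _ _ p.2.1 p.2.2) ⟨p, hp⟩ ⟨q, hq⟩
  have hsq : α ^ 2 = γ ^ 2 := by rw [← sq_abs, hαγ, sq_abs]
  rw [show cov P _ _ = cov[X k₁ ℓ₁, X k₂ ℓ₂; P] from rfl, hX, hX,
    covariance_fun_sum_fun_sum_of_orthonormal (ε := fun p => ε p.1 p.2) hmem horth
      (hrect k₁ ℓ₁) (hrect k₂ ℓ₂), ← hαγ, ← hsq]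
  exact abs_sum_inter_Icc_prod_le hβ (hαγ ▸ hγ) k₁ ℓ₁ k₂ ℓ₂

theorem cov_bound_edge_beta
    {Ω : Type*} [MeasurableSpace Ω] (P : Measure Ω) [IsProbabilityMeasure P]
    (ε : ℕ → ℕ → Ω → ℝ)
    (hmeas : ∀ k ℓ : ℕ, Measurable (ε k ℓ))
    (hindep : iIndepFun
      (fun p : {p : ℕ × ℕ // 1 ≤ p.1 ∧ 1 ≤ p.2} => ε p.1.1 p.1.2) P)
    (hmean : ∀ k ℓ : ℕ, 1 ≤ k → 1 ≤ ℓ → ∫ ω, ε k ℓ ω ∂P = 0)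
    (hvar : ∀ k ℓ : ℕ, 1 ≤ k → 1 ≤ ℓ → variance (ε k ℓ) P = 1)
    (α β γ : ℝ)
    (X : ℕ → ℕ → Ω → ℝ)
    (hrec : ∀ k ℓ : ℕ, 1 ≤ k → 1 ≤ ℓ → ∀ ω : Ω,
      X k ℓ ω = α * X (k - 1) ℓ ω + β * X k (ℓ - 1) ω + γ * X (k - 1) (ℓ - 1) ω + ε k ℓ ω)
    (hbd1 : ∀ k : ℕ, ∀ ω : Ω, X k 0 ω = 0)
    (hbd2 : ∀ ℓ : ℕ, ∀ ω : Ω, X 0 ℓ ω = 0)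
    (hsign : α * β * γ ≤ 0) (hβ : |β| = 1) (hαγ : |α| = |γ|) (hγ : |γ| < 1) :
    ∀ k₁ ℓ₁ k₂ ℓ₂ : ℕ, 1 ≤ k₁ → 1 ≤ ℓ₁ → 1 ≤ k₂ → 1 ≤ ℓ₂ →
      |cov P (X k₁ ℓ₁) (X k₂ ℓ₂)| ≤
        ((min ℓ₁ ℓ₂ : ℕ) : ℝ) * |γ| ^ ((k₁ : ℤ) - k₂).natAbs / (1 - γ ^ 2) :=
  cov_bound_edge_beta_general P ε hmeas hindep hvar α β γ X hrec hbd1 hbd2 hsign hβ hαγ hγ
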